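/- Let R be a finite set, π a partition of R, and a, g : R → B functions such that g is constant on every block of π and such that g(x) = g(y) = true implies that x and y lie in the same block of π. Define the relation e' on R by: e'(x,y) iff (a(x) ∧ a(y)) ∨ (¬a(x) ∧ a(y) ∧ g(x)) ∨ (a(x) ∧ ¬a(y) ∧ g(y)) ∨ (¬a(x) ∧ ¬a(y) ∧ x and y lie in the same block of π). Then e' is an equivalence relation on R (so its equivalence classes form a partition of R; in particular it is impossible that e'(x,y) and e'(y,z) hold but e'(x,z) fails). -/
import Mathlib


/-- let `R` be a finite set, `π` a partition of `R` (modelled as the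
equivalence relation `s` of a setoid — its classes are the blocks), and `a g : R → B`
with `g` constant on every block and `g x = g y = true` implying that `x` and `y` lie
in the same block.  Then the relation
`e'(x,y) ⟺ (a x ∧ a y) ∨ (¬a x ∧ a y ∧ g x) ∨ (a x ∧ ¬a y ∧ g y) ∨ (¬a x ∧ ¬a y ∧ x ~ y)`
is an equivalence relation on `R` (so its classes form a partition; in particular it is
impossible that `e'(x,y)` and `e'(y,z)` hold while `e'(x,z)` fails). -/
theorem stmt2 (R : Type) [Finite R] (s : Setoid R) (a g : R → Bool)
    (hconst : ∀ x y, s.r x y → g x = g y)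
    (htrue : ∀ x y, g x = true → g y = true → s.r x y) :
    Equivalence (fun x y =>
      (a x = true ∧ a y = true) ∨
      (a x = false ∧ a y = true ∧ g x = true) ∨
      (a x = true ∧ a y = false ∧ g y = true) ∨
      (a x = false ∧ a y = false ∧ s.r x y)) := by
  constructor
  · intro x
    cases h : a x
    · exact Or.inr (Or.inr (Or.inr ⟨rfl, rfl, s.refl x⟩))
    · exact Or.inl ⟨rfl, rfl⟩
  · rintro x y (⟨h1, h2⟩ | ⟨h1, h2, h3⟩ | ⟨h1, h2, h3⟩ | ⟨h1, h2, h3⟩)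
    · exact Or.inl ⟨h2, h1⟩
    · exact Or.inr (Or.inr (Or.inl ⟨h2, h1, h3⟩))
    · exact Or.inr (Or.inl ⟨h2, h1, h3⟩)
    · exact Or.inr (Or.inr (Or.inr ⟨h2, h1, s.symm h3⟩))
  · rintro x y z (⟨h1, h2⟩ | ⟨h1, h2, h3⟩ | ⟨h1, h2, h3⟩ | ⟨h1, h2, h3⟩)
      (⟨k1, k2⟩ | ⟨k1, k2, k3⟩ | ⟨k1, k2, k3⟩ | ⟨k1, k2, k3⟩) <;>
      simp_all
    · exact (hconst y z k3).symm.trans h3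
    · exact (hconst x y h3).trans k3
    · exact s.trans h3 k3
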